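/- arXiv:1610.02725 — 2 statements merged into one kernel-verified Lean document; each statement's English description precedes it below -/
import Mathlib

section
/- Let m = N·v and let vectors in ℝ^m be partitioned into N blocks of size v. Let A be a symmetric positive semidefinite m×m real matrix, let τ > 0 and λ > 0, let B ∈ ℝ^m, and suppose every eigenvalue of I − τ²A has absolute value at most ξ, where 0 ≤ ξ < 1. Define F(β) = S_{λτ²}((I − τ²A)β + τ²B), where S_{λτ²} is blockwise group soft-thresholding with threshold λτ². Then F has a unique fixed point β̂ ∈ ℝ^m, and for every initial point β⁽⁰⁾ the iterates β⁽ᵏ⁾ = F(β⁽ᵏ⁻¹⁾) satisfy ‖β⁽ᵏ⁾ − β̂‖₂ ≤ (ξᵏ/(1 − ξ))·‖β⁽¹⁾ − β⁽⁰⁾‖₂ for all k ≥ 0; in particular the error decays exponentially in k. -/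
/-!
The linear part `M = I - τ²A` of the affine map `β ↦ Mβ + τ²B` is symmetric with all eigenvalues
in `[-ξ, ξ]`, so in an orthonormal eigenbasis it shrinks every coordinate by a factor `≤ ξ`.
Group soft-thresholding, the proximal map of `c‖·‖`, is nonexpansive on each block, hence on the
whole Euclidean space. So `F` is a `ξ`-contraction of `ℝ^(N·v)` and Banach's fixed point theorem
gives the unique fixed point together with the a priori estimate `ξᵏ / (1 - ξ) · ‖β⁽¹⁾ - β⁽⁰⁾‖`.
-/

open scoped BigOperators

/-- Euclidean norm of the `d`-th block (of size `v`) of a vector in `ℝ^(N·v)`. -/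
noncomputable def blockNorm {N v : ℕ} (r : Fin N × Fin v → ℝ) (d : Fin N) : ℝ :=
  Real.sqrt (∑ j, r (d, j) ^ 2)

/-- Blockwise group soft-thresholding with threshold `c`:
the `d`-th block `r_d` is mapped to `[1 - c/‖r_d‖₂]₊ • r_d`. -/
noncomputable def softThresh {N v : ℕ} (c : ℝ) (r : Fin N × Fin v → ℝ) :
    Fin N × Fin v → ℝ :=
  fun p => (if blockNorm r p.1 ≤ c then 0 else 1 - c / blockNorm r p.1) * r p

open scoped RealInnerProductSpace
open Matrix Module.End WithLp

section GroupSoftThreshold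

variable {E : Type*} [NormedAddCommGroup E] [InnerProductSpace ℝ E] {c : ℝ}

noncomputable def groupSoftThreshold (c : ℝ) (x : E) : E :=
  (if ‖x‖ ≤ c then 0 else 1 - c / ‖x‖) • x

lemma groupSoftThreshold_of_norm_le {x : E} (hx : ‖x‖ ≤ c) : groupSoftThreshold c x = 0 := by
  simp [groupSoftThreshold, hx]

lemma groupSoftThreshold_of_lt_norm {x : E} (hx : c < ‖x‖) :
    groupSoftThreshold c x = (1 - c / ‖x‖) • x := by
  simp [groupSoftThreshold, hx.not_ge]

lemma norm_groupSoftThreshold_of_lt_norm (hc : 0 ≤ c) {x : E} (hx : c < ‖x‖) :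
    ‖groupSoftThreshold c x‖ = ‖x‖ - c := by
  have hx0 : 0 < ‖x‖ := hc.trans_lt hx
  rw [groupSoftThreshold_of_lt_norm hx, norm_smul, Real.norm_eq_abs,
    abs_of_nonneg (by rw [sub_nonneg, div_le_one hx0]; exact hx.le), sub_mul, one_mul,
    div_mul_cancel₀ _ hx0.ne']

lemma norm_groupSoftThreshold_sub_le_of_norm_le_of_lt (hc : 0 ≤ c) {x y : E} (hx : ‖x‖ ≤ c)
    (hy : c < ‖y‖) : ‖groupSoftThreshold c x - groupSoftThreshold c y‖ ≤ ‖x - y‖ := by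
  rw [groupSoftThreshold_of_norm_le hx, zero_sub, norm_neg,
    norm_groupSoftThreshold_of_lt_norm hc hy, norm_sub_rev]
  linarith [norm_sub_norm_le y x]

lemma norm_groupSoftThreshold_sub_le_of_lt_of_lt (hc : 0 ≤ c) {x y : E} (hx : c < ‖x‖)
    (hy : c < ‖y‖) : ‖groupSoftThreshold c x - groupSoftThreshold c y‖ ≤ ‖x - y‖ := by
  have ha : 0 < ‖x‖ := hc.trans_lt hx
  have hb : 0 < ‖y‖ := hc.trans_lt hy
  have hxy : ⟪x, y⟫ ≤ ‖x‖ * ‖y‖ := real_inner_le_norm x y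
  rw [groupSoftThreshold_of_lt_norm hx, groupSoftThreshold_of_lt_norm hy,
    ← sq_le_sq₀ (norm_nonneg _) (norm_nonneg _), norm_sub_sq_real, norm_sub_sq_real,
    norm_smul, norm_smul, real_inner_smul_left, real_inner_smul_right, mul_pow, mul_pow,
    Real.norm_eq_abs, Real.norm_eq_abs, sq_abs, sq_abs]
  -- with `a = ‖x‖`, `b = ‖y‖`, `S = groupSoftThreshold c`:
  -- `a b (‖x - y‖² - ‖S x - S y‖²) = 2 c (a + b - c) (a b - ⟪x, y⟫)`
  field_simp
  nlinarith [mul_nonneg (mul_nonneg hc (by linarith : 0 ≤ ‖x‖ + ‖y‖ - c)) (sub_nonneg.2 hxy)]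

lemma norm_groupSoftThreshold_sub_le (hc : 0 ≤ c) (x y : E) :
    ‖groupSoftThreshold c x - groupSoftThreshold c y‖ ≤ ‖x - y‖ := by
  rcases le_or_gt ‖x‖ c with hx | hx <;> rcases le_or_gt ‖y‖ c with hy | hy
  · simp [groupSoftThreshold_of_norm_le hx, groupSoftThreshold_of_norm_le hy]
  · exact norm_groupSoftThreshold_sub_le_of_norm_le_of_lt hc hx hy
  · rw [norm_sub_rev, norm_sub_rev x]
    exact norm_groupSoftThreshold_sub_le_of_norm_le_of_lt hc hy hx
  · exact norm_groupSoftThreshold_sub_le_of_lt_of_lt hc hx hy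

end GroupSoftThreshold

section Blocks

variable {ι κ : Type*} [Fintype ι] [Fintype κ]

def block (r : ι × κ → ℝ) (i : ι) : EuclideanSpace ℝ κ :=
  toLp 2 fun j => r (i, j)

lemma dist_sq_eq_sum_dist_block_sq (x y : EuclideanSpace ℝ (ι × κ)) :
    dist x y ^ 2 = ∑ i, dist (block (ofLp x) i) (block (ofLp y) i) ^ 2 := by
  simp only [EuclideanSpace.dist_sq_eq, Fintype.sum_prod_type]
  rfl

end Blocks

lemma blockNorm_eq_norm_block {N v : ℕ} (r : Fin N × Fin v → ℝ) (d : Fin N) :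
    blockNorm r d = ‖block r d‖ := by
  simp [blockNorm, block, EuclideanSpace.norm_eq]

lemma block_softThresh {N v : ℕ} (c : ℝ) (r : Fin N × Fin v → ℝ) (d : Fin N) :
    block (softThresh c r) d = groupSoftThreshold c (block r d) := by
  ext j
  simp only [block, softThresh, groupSoftThreshold, blockNorm_eq_norm_block, PiLp.smul_apply,
    smul_eq_mul]
  rfl

lemma lipschitzWith_one_softThresh {N v : ℕ} {c : ℝ} (hc : 0 ≤ c) :
    LipschitzWith 1 fun r : EuclideanSpace ℝ (Fin N × Fin v) =>
      toLp 2 (softThresh c (ofLp r)) := by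
  refine LipschitzWith.of_dist_le_mul fun r s => ?_
  rw [NNReal.coe_one, one_mul, ← sq_le_sq₀ dist_nonneg dist_nonneg,
    dist_sq_eq_sum_dist_block_sq, dist_sq_eq_sum_dist_block_sq]
  gcongr with d
  simp only [block_softThresh, dist_eq_norm]
  exact norm_groupSoftThreshold_sub_le hc _ _

lemma LinearMap.IsSymmetric.norm_apply_le_of_forall_hasEigenvalue {E : Type*}
    [NormedAddCommGroup E] [InnerProductSpace ℝ E] [FiniteDimensional ℝ E] {T : E →ₗ[ℝ] E}
    (hT : T.IsSymmetric) {ξ : ℝ} (hξ : 0 ≤ ξ) (h : ∀ μ, HasEigenvalue T μ → |μ| ≤ ξ) (x : E) :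
    ‖T x‖ ≤ ξ * ‖x‖ := by
  let b := hT.eigenvectorBasis rfl
  have hcoord (i) : (b.repr (T x) i) ^ 2 ≤ ξ ^ 2 * (b.repr x i) ^ 2 := by
    rw [hT.eigenvectorBasis_apply_self_apply, mul_pow]
    refine mul_le_mul_of_nonneg_right (sq_le_sq.2 ?_) (sq_nonneg _)
    exact (abs_of_nonneg hξ).symm ▸ h _ (hT.hasEigenvalue_eigenvalues rfl i)
  rw [← sq_le_sq₀ (norm_nonneg _) (by positivity), mul_pow, ← b.repr.norm_map,
    ← b.repr.norm_map x, EuclideanSpace.real_norm_sq_eq, EuclideanSpace.real_norm_sq_eq,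
    Finset.mul_sum]
  exact Finset.sum_le_sum fun i _ => hcoord i

lemma Matrix.IsHermitian.norm_toEuclideanLin_le {n : Type*} [Fintype n] [DecidableEq n]
    {M : Matrix n n ℝ} (hM : M.IsHermitian) {ξ : ℝ} (hξ : 0 ≤ ξ)
    (h : ∀ (μ : ℝ) (x : n → ℝ), x ≠ 0 → M *ᵥ x = μ • x → |μ| ≤ ξ) (x : EuclideanSpace ℝ n) :
    ‖M.toEuclideanLin x‖ ≤ ξ * ‖x‖ := by
  refine (isSymmetric_toEuclideanLin_iff.2 hM).norm_apply_le_of_forall_hasEigenvalue hξ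
    (fun μ hμ => ?_) x
  obtain ⟨y, hy, hy0⟩ := hμ.exists_hasEigenvector
  exact h μ (ofLp y) (by simpa using hy0) (congrArg ofLp (mem_eigenspace_iff.1 hy))

lemma lipschitzWith_softThresh_mulVec_add {N v : ℕ} {c : ℝ} (hc : 0 ≤ c)
    {M : Matrix (Fin N × Fin v) (Fin N × Fin v) ℝ} (hM : M.IsHermitian) {ξ : ℝ} (hξ : 0 ≤ ξ)
    (h : ∀ (μ : ℝ) (x : Fin N × Fin v → ℝ), x ≠ 0 → M *ᵥ x = μ • x → |μ| ≤ ξ)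
    (b : Fin N × Fin v → ℝ) :
    LipschitzWith ξ.toNNReal fun β : EuclideanSpace ℝ (Fin N × Fin v) =>
      toLp 2 (softThresh c (M *ᵥ ofLp β + b)) := by
  have haffine : LipschitzWith ξ.toNNReal fun β => M.toEuclideanLin β + toLp 2 b :=
    LipschitzWith.of_dist_le_mul fun x y => by
      rw [dist_add_right, dist_eq_norm, dist_eq_norm, ← map_sub, Real.coe_toNNReal _ hξ]
      exact hM.norm_toEuclideanLin_le hξ h _
  rw [← one_mul ξ.toNNReal]
  exact (lipschitzWith_one_softThresh hc).comp haffine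

lemma EuclideanSpace.dist_eq_sqrt_sum_sq {ι : Type*} [Fintype ι] (x y : EuclideanSpace ℝ ι) :
    dist x y = √(∑ i, (ofLp x i - ofLp y i) ^ 2) := by
  simp [EuclideanSpace.dist_eq, Real.dist_eq]

theorem slants_EM_exponential_convergence_general {N v : ℕ}
    (A : Matrix (Fin N × Fin v) (Fin N × Fin v) ℝ)
    (hAsymm : A.IsSymm)
    (τ lam ξ : ℝ) (hlam : 0 < lam) (hξ0 : 0 ≤ ξ) (hξ1 : ξ < 1)
    (B : Fin N × Fin v → ℝ)
    (heig : ∀ (μ : ℝ) (x : Fin N × Fin v → ℝ), x ≠ 0 →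
      ((1 : Matrix (Fin N × Fin v) (Fin N × Fin v) ℝ) - τ ^ 2 • A).mulVec x = μ • x →
      |μ| ≤ ξ)
    (F : (Fin N × Fin v → ℝ) → (Fin N × Fin v → ℝ))
    (hF : ∀ β, F β = softThresh (lam * τ ^ 2)
      (((1 : Matrix (Fin N × Fin v) (Fin N × Fin v) ℝ) - τ ^ 2 • A).mulVec β + τ ^ 2 • B)) :
    ∃ βhat : Fin N × Fin v → ℝ,
      F βhat = βhat ∧
      (∀ β' : Fin N × Fin v → ℝ, F β' = β' → β' = βhat) ∧
      (∀ (β₀ : Fin N × Fin v → ℝ) (k : ℕ),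
        Real.sqrt (∑ p, (F^[k] β₀ p - βhat p) ^ 2)
          ≤ ξ ^ k / (1 - ξ) * Real.sqrt (∑ p, (F β₀ p - β₀ p) ^ 2)) := by
  have hM : (1 - τ ^ 2 • A).IsHermitian :=
    isHermitian_one.sub ((isHermitian_iff_isSymm.2 hAsymm).smul (.all _))
  let G : EuclideanSpace ℝ (Fin N × Fin v) → EuclideanSpace ℝ (Fin N × Fin v) :=
    fun β => toLp 2 (F (ofLp β))
  have hsemiconj : Function.Semiconj (toLp 2) F G := fun _ => rfl
  have hG : ContractingWith ξ.toNNReal G := by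
    refine ⟨Real.toNNReal_lt_one.2 hξ1, ?_⟩
    simpa only [G, hF] using
      lipschitzWith_softThresh_mulVec_add (by positivity) hM hξ0 heig (τ ^ 2 • B)
  refine ⟨ofLp (hG.fixedPoint G), congrArg ofLp hG.fixedPoint_isFixedPt,
    fun β hβ => congrArg ofLp (hG.fixedPoint_unique (congrArg (toLp 2) hβ)), fun β₀ k => ?_⟩
  have hbound := hG.apriori_dist_iterate_fixedPoint_le (toLp 2 β₀) k
  rw [← hsemiconj.iterate_right k β₀, ← hsemiconj.eq, dist_comm (toLp 2 β₀),
    Real.coe_toNNReal _ hξ0] at hbound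
  simp only [EuclideanSpace.dist_eq_sqrt_sum_sq] at hbound
  exact hbound.trans_eq (by ring)

/-- Theorem 1 (exponential convergence): the EM iteration map
`F(β) = S_{λτ²}((I − τ²A)β + τ²B)` has a unique fixed point `β̂`, and the iterates
`β⁽ᵏ⁾ = F^[k](β⁽⁰⁾)` satisfy `‖β⁽ᵏ⁾ − β̂‖₂ ≤ ξᵏ/(1−ξ)·‖β⁽¹⁾ − β⁽⁰⁾‖₂`. -/
theorem slants_EM_exponential_convergence {N v : ℕ}
    (A : Matrix (Fin N × Fin v) (Fin N × Fin v) ℝ)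
    (hAsymm : A.IsSymm) (hApsd : A.PosSemidef)
    (τ lam ξ : ℝ) (hτ : 0 < τ) (hlam : 0 < lam) (hξ0 : 0 ≤ ξ) (hξ1 : ξ < 1)
    (B : Fin N × Fin v → ℝ)
    (heig : ∀ (μ : ℝ) (x : Fin N × Fin v → ℝ), x ≠ 0 →
      ((1 : Matrix (Fin N × Fin v) (Fin N × Fin v) ℝ) - τ ^ 2 • A).mulVec x = μ • x →
      |μ| ≤ ξ)
    (F : (Fin N × Fin v → ℝ) → (Fin N × Fin v → ℝ))
    (hF : ∀ β, F β = softThresh (lam * τ ^ 2)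
      (((1 : Matrix (Fin N × Fin v) (Fin N × Fin v) ℝ) - τ ^ 2 • A).mulVec β + τ ^ 2 • B)) :
    ∃ βhat : Fin N × Fin v → ℝ,
      F βhat = βhat ∧
      (∀ β' : Fin N × Fin v → ℝ, F β' = β' → β' = βhat) ∧
      (∀ (β₀ : Fin N × Fin v → ℝ) (k : ℕ),
        Real.sqrt (∑ p, (F^[k] β₀ p - βhat p) ^ 2)
          ≤ ξ ^ k / (1 - ξ) * Real.sqrt (∑ p, (F β₀ p - β₀ p) ^ 2)) :=
  slants_EM_exponential_convergence_general A hAsymm τ lam ξ hlam hξ0 hξ1 B heig F hF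
end

section
/- Let E be a real inner product space and τ ≥ 0. Define the soft-thresholding map S_τ : E → E by S_τ(x) = (1 − τ/‖x‖)·x if ‖x‖ > τ and S_τ(x) = 0 if ‖x‖ ≤ τ. Then S_τ is nonexpansive: for all x, y ∈ E, ‖S_τ(x) − S_τ(y)‖ ≤ ‖x − y‖. -/
open RealInnerProductSpace

/-!
Write `x = ‖x‖ • u` and `y = ‖y‖ • v` with unit vectors `u`, `v`. Above the threshold both radii
shrink by the same `τ`, and
`‖x - y‖² - ‖S x - S y‖² = 2 τ (‖x‖ + ‖y‖ - τ) (1 - ⟪u, v⟫) ≥ 0`.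
If only `x` is above the threshold, `‖S x‖ = ‖x‖ - τ ≤ ‖x‖ - ‖y‖ ≤ ‖x - y‖`.
-/

noncomputable def softThreshold {E : Type*} [NormedAddCommGroup E] [NormedSpace ℝ E]
    (τ : ℝ) (x : E) : E :=
  if ‖x‖ ≤ τ then 0 else (1 - τ / ‖x‖) • x

theorem norm_inv_norm_smul {E : Type*} [NormedAddCommGroup E] [NormedSpace ℝ E] {x : E}
    (hx : x ≠ 0) : ‖‖x‖⁻¹ • x‖ = 1 :=
  norm_smul_inv_norm (𝕜 := ℝ) hx

section UnitVectors

variable {E : Type*} [NormedAddCommGroup E] [InnerProductSpace ℝ E] {u v : E}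

theorem norm_smul_sub_smul_sq_of_norm_eq_one (hu : ‖u‖ = 1) (hv : ‖v‖ = 1) (s t : ℝ) :
    ‖s • u - t • v‖ ^ 2 = s ^ 2 + t ^ 2 - 2 * (s * t) * ⟪u, v⟫ := by
  rw [norm_sub_sq_real, norm_smul, norm_smul, real_inner_smul_left, real_inner_smul_right,
    hu, hv, Real.norm_eq_abs, Real.norm_eq_abs, mul_one, mul_one, sq_abs, sq_abs]
  ring

theorem norm_smul_sub_smul_le_of_shrink (hu : ‖u‖ = 1) (hv : ‖v‖ = 1) {a b τ : ℝ}
    (hτ : 0 ≤ τ) (hτab : τ ≤ a + b) :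
    ‖(a - τ) • u - (b - τ) • v‖ ≤ ‖a • u - b • v‖ := by
  have hinner : ⟪u, v⟫ ≤ 1 := by simpa [hu, hv] using real_inner_le_norm u v
  have hgap : ‖a • u - b • v‖ ^ 2 - ‖(a - τ) • u - (b - τ) • v‖ ^ 2
      = 2 * τ * (a + b - τ) * (1 - ⟪u, v⟫) := by
    rw [norm_smul_sub_smul_sq_of_norm_eq_one hu hv, norm_smul_sub_smul_sq_of_norm_eq_one hu hv]
    ring
  refine (sq_le_sq₀ (norm_nonneg _) (norm_nonneg _)).mp ?_
  have : 0 ≤ 2 * τ * (a + b - τ) * (1 - ⟪u, v⟫) := by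
    apply mul_nonneg (mul_nonneg (by positivity) ?_) <;> linarith
  linarith

end UnitVectors

section SoftThreshold

variable {E : Type*} [NormedAddCommGroup E] {τ : ℝ} {x y : E}

section NormedSpace

variable [NormedSpace ℝ E]

theorem softThreshold_of_norm_le (hx : ‖x‖ ≤ τ) : softThreshold τ x = 0 := if_pos hx

theorem softThreshold_of_lt_norm (hτ : 0 ≤ τ) (hx : τ < ‖x‖) :
    softThreshold τ x = (‖x‖ - τ) • (‖x‖⁻¹ • x) := by
  have hx0 : ‖x‖ ≠ 0 := (hτ.trans_lt hx).ne'
  rw [softThreshold, if_neg hx.not_ge, smul_smul]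
  congr 1
  field_simp

theorem norm_softThreshold_of_lt_norm (hτ : 0 ≤ τ) (hx : τ < ‖x‖) :
    ‖softThreshold τ x‖ = ‖x‖ - τ := by
  rw [softThreshold_of_lt_norm hτ hx, norm_smul, norm_inv_norm_smul
    (norm_pos_iff.mp (hτ.trans_lt hx)), mul_one, Real.norm_of_nonneg (by linarith)]

theorem norm_softThreshold_le_norm_sub (hτ : 0 ≤ τ) (hx : τ < ‖x‖) (hy : ‖y‖ ≤ τ) :
    ‖softThreshold τ x‖ ≤ ‖x - y‖ := by
  rw [norm_softThreshold_of_lt_norm hτ hx]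
  linarith [norm_sub_norm_le x y]

end NormedSpace

theorem norm_softThreshold_sub_softThreshold_le [InnerProductSpace ℝ E] (hτ : 0 ≤ τ) (x y : E) :
    ‖softThreshold τ x - softThreshold τ y‖ ≤ ‖x - y‖ := by
  rcases le_or_gt ‖x‖ τ with hx | hx <;> rcases le_or_gt ‖y‖ τ with hy | hy
  · simp [softThreshold_of_norm_le hx, softThreshold_of_norm_le hy]
  · rw [softThreshold_of_norm_le hx, zero_sub, norm_neg, norm_sub_rev]
    exact norm_softThreshold_le_norm_sub hτ hy hx
  · rw [softThreshold_of_norm_le hy, sub_zero]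
    exact norm_softThreshold_le_norm_sub hτ hx hy
  · have hx0 : x ≠ 0 := norm_pos_iff.mp (hτ.trans_lt hx)
    have hy0 : y ≠ 0 := norm_pos_iff.mp (hτ.trans_lt hy)
    rw [softThreshold_of_lt_norm hτ hx, softThreshold_of_lt_norm hτ hy]
    conv_rhs => rw [← smul_inv_smul₀ (norm_ne_zero_iff.mpr hx0) x,
      ← smul_inv_smul₀ (norm_ne_zero_iff.mpr hy0) y]
    exact norm_smul_sub_smul_le_of_shrink (norm_inv_norm_smul hx0)
      (norm_inv_norm_smul hy0) hτ (by linarith [norm_nonneg y])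

end SoftThreshold

/-- Soft-thresholding `S_τ(x) = (1 − τ/‖x‖)·x` if `‖x‖ > τ`, else `0`, is nonexpansive
on a real inner product space. -/
theorem soft_threshold_nonexpansive {E : Type*} [NormedAddCommGroup E]
    [InnerProductSpace ℝ E] (τ : ℝ) (hτ : 0 ≤ τ)
    (S : E → E) (hS : ∀ x, S x = if ‖x‖ ≤ τ then 0 else (1 - τ / ‖x‖) • x) :
    ∀ x y : E, ‖S x - S y‖ ≤ ‖x - y‖ := by
  obtain rfl : S = softThreshold τ := funext hS
  exact norm_softThreshold_sub_softThreshold_le hτ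
end
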